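/- Every Alice-concordant state ρ = Σ_j p_j π_j ⊗ ρ_j that is also Bob-concordant (i.e., equals Σ_k q_k σ_k ⊗ τ_k with {τ_k} mutually orthogonal rank-one projectors on H_B) can be written in the consonant form ρ = Σ_j r_j π'_j ⊗ π''_j, where {π'_j} are mutually orthogonal rank-one projectors on H_A and {π''_j} are mutually orthogonal rank-one projectors on H_B. -/

import Mathlib

open Matrix
open scoped Kronecker ComplexOrder

noncomputable section

abbrev Mat (n : Type) := Matrix n n ℂ

/-- A density operator: positive semidefinite with unit trace. -/
def IsDensity {n : Type} [Fintype n] (ρ : Mat n) : Prop :=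
  ρ.PosSemidef ∧ ρ.trace = 1

/-- A rank-one projector: Hermitian idempotent of trace one. -/
def IsRankOneProj {n : Type} [Fintype n] (π : Mat n) : Prop :=
  π.IsHermitian ∧ π * π = π ∧ π.trace = 1

/-- A mutually orthogonal family of operators. -/
def OrthFamily {n J : Type} [Fintype n] (π : J → Mat n) : Prop :=
  ∀ i j : J, i ≠ j → π i * π j = 0

/-- A probability distribution on a finite index set. -/
def IsProbDist {J : Type} [Fintype J] (p : J → ℝ) : Prop :=
  (∀ j, 0 ≤ p j) ∧ ∑ j, p j = 1

/-- Outer product |v⟩⟨v|. -/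
def outer {n : Type} (v : n → ℂ) : Mat n :=
  fun i j => v i * star (v j)

/-- Partial trace over the first (Alice) factor. -/
def traceA {a b : Type} [Fintype a] (ρ : Mat (a × b)) : Mat b :=
  fun i j => ∑ k, ρ (k, i) (k, j)

/-- Partial trace over the second (Bob) factor. -/
def traceB {a b : Type} [Fintype b] (ρ : Mat (a × b)) : Mat a :=
  fun i j => ∑ k, ρ (i, k) (j, k)

/-- Separable (unentangled): a convex combination of product density operators. -/
def Separable {a b : Type} [Fintype a] [Fintype b] (ρ : Mat (a × b)) : Prop :=
  ∃ (m : ℕ) (p : Fin m → ℝ) (σ : Fin m → Mat a) (τ : Fin m → Mat b),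
    IsProbDist p ∧ (∀ k, IsDensity (σ k)) ∧ (∀ k, IsDensity (τ k)) ∧
    ρ = ∑ k, (p k : ℂ) • (σ k ⊗ₖ τ k)

/-- Alice-concordant (zero Alice-discord): ρ = Σ_j p_j π_j ⊗ ρ_j with
{π_j} mutually orthogonal rank-one projectors on Alice's factor. -/
def AliceConcordant {a b : Type} [Fintype a] [Fintype b] (ρ : Mat (a × b)) : Prop :=
  ∃ (m : ℕ) (p : Fin m → ℝ) (π : Fin m → Mat a) (σ : Fin m → Mat b),
    IsProbDist p ∧ (∀ j, IsRankOneProj (π j)) ∧ OrthFamily π ∧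
    (∀ j, IsDensity (σ j)) ∧ ρ = ∑ j, (p j : ℂ) • (π j ⊗ₖ σ j)

/-- Bob-concordant: the symmetric notion. -/
def BobConcordant {a b : Type} [Fintype a] [Fintype b] (ρ : Mat (a × b)) : Prop :=
  ∃ (m : ℕ) (p : Fin m → ℝ) (σ : Fin m → Mat a) (π : Fin m → Mat b),
    IsProbDist p ∧ (∀ j, IsRankOneProj (π j)) ∧ OrthFamily π ∧
    (∀ j, IsDensity (σ j)) ∧ ρ = ∑ j, (p j : ℂ) • (σ j ⊗ₖ π j)

/-- Von Neumann entropy, via the eigenvalues of a Hermitian matrix. -/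
def vN {n : Type} [Fintype n] [DecidableEq n] (ρ : Mat n) : ℝ :=
  if h : ρ.IsHermitian then -∑ i, h.eigenvalues i * Real.log (h.eigenvalues i) else 0

/-! Pinching with Bob's projectors, `X ↦ ∑ₖ (1 ⊗ Pₖ) X (1 ⊗ Pₖ)`, fixes the Bob-concordant form
of `ρ`. Applied to the Alice-concordant form `∑ⱼ pⱼ πⱼ ⊗ σⱼ` it replaces each `σⱼ` by
`∑ₖ Pₖ σⱼ Pₖ = ∑ₖ ⟨wₖ|σⱼ|wₖ⟩ Pₖ`, since `Pₖ = |wₖ⟩⟨wₖ|` has rank one. Hence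
`ρ = ∑ⱼₖ pⱼ ⟨wₖ|σⱼ|wₖ⟩ πⱼ ⊗ Pₖ`, and the weights are nonnegative because `σⱼ ≥ 0`. -/

lemma outer_mul_mul_outer {n : Type} [Fintype n] (v : n → ℂ) (A : Mat n) :
    outer v * A * outer v = (star v ⬝ᵥ A *ᵥ v) • outer v := by
  ext i j
  simp only [mul_apply, outer, Matrix.smul_apply, dotProduct, mulVec, Pi.star_apply,
    smul_eq_mul, Finset.sum_mul, Finset.mul_sum]
  rw [Finset.sum_comm]
  exact Finset.sum_congr rfl fun s _ => Finset.sum_congr rfl fun t _ => by ring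

lemma exists_eq_single_of_sum_eq_one {ι R : Type*} [Fintype ι] [DecidableEq ι]
    [AddCommMonoidWithOne R] [CharZero R] {f : ι → R} (h01 : ∀ i, f i = 0 ∨ f i = 1)
    (hsum : ∑ i, f i = 1) : ∃ i₀, f = Pi.single i₀ 1 := by
  classical
  have hf : f = fun i => if f i = 1 then 1 else 0 := by
    funext i
    rcases h01 i with h | h <;> simp [h]
  rw [hf, Finset.sum_boole] at hsum
  obtain ⟨i₀, hi₀⟩ := Finset.card_eq_one.mp (by exact_mod_cast hsum)
  refine ⟨i₀, funext fun i => ?_⟩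
  have hi := Finset.ext_iff.mp hi₀ i
  simp only [Finset.mem_filter, Finset.mem_univ, true_and, Finset.mem_singleton] at hi
  rw [Pi.single_apply]
  split_ifs with h
  · exact hi.mpr h
  · exact (h01 i).resolve_right (mt hi.mp h)

lemma IsRankOneProj.exists_eq_outer {n : Type} [Fintype n] {π : Mat n} (h : IsRankOneProj π) :
    ∃ v : n → ℂ, π = outer v := by
  classical
  obtain ⟨hπ, hidem, htr⟩ := h
  have h01 (j : n) : hπ.eigenvalues j = 0 ∨ hπ.eigenvalues j = 1 :=
    IsIdempotentElem.spectrum_subset ℝ hidem (hπ.eigenvalues_mem_spectrum_real j)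
  have hsum : ∑ j, hπ.eigenvalues j = 1 := by
    have h := hπ.trace_eq_sum_eigenvalues.symm.trans htr
    rwa [← RCLike.ofReal_sum, ← RCLike.ofReal_one, RCLike.ofReal_inj] at h
  obtain ⟨j₀, hj₀⟩ := exists_eq_single_of_sum_eq_one h01 hsum
  refine ⟨hπ.eigenvectorBasis j₀, ?_⟩
  conv_lhs => rw [hπ.spectral_theorem, Unitary.conjStarAlgAut_apply, hj₀]
  ext i k
  simp [mul_apply, diagonal, Pi.single_apply, outer, apply_ite]

lemma IsRankOneProj.exists_mul_mul_self_eq_smul {n : Type} [Fintype n] {P σ : Mat n}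
    (hP : IsRankOneProj P) (hσ : σ.PosSemidef) : ∃ c : ℝ, 0 ≤ c ∧ P * σ * P = (c : ℂ) • P := by
  obtain ⟨v, rfl⟩ := hP.exists_eq_outer
  obtain ⟨c, hc, hcv⟩ := RCLike.nonneg_iff_exists_ofReal.mp (hσ.dotProduct_mulVec_nonneg v)
  exact ⟨c, hc, by rw [outer_mul_mul_outer, ← hcv]; rfl⟩

lemma one_kronecker_mul_kronecker_mul {R a b : Type*} [CommSemiring R] [Fintype a] [Fintype b]
    [DecidableEq a] (P : Matrix b b R) (S : Matrix a a R) (T : Matrix b b R) :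
    ((1 : Matrix a a R) ⊗ₖ P) * (S ⊗ₖ T) * (1 ⊗ₖ P) = S ⊗ₖ (P * T * P) := by
  rw [← mul_kronecker_mul, ← mul_kronecker_mul, one_mul, mul_one]

lemma trace_sum_smul_kronecker {ι a b : Type} [Fintype ι] [Fintype a] [Fintype b] (c : ι → ℂ)
    (S : ι → Mat a) (T : ι → Mat b) :
    trace (∑ i, c i • (S i ⊗ₖ T i)) = ∑ i, c i * (trace (S i) * trace (T i)) := by
  simp only [trace_sum, trace_smul, trace_kronecker, smul_eq_mul]

section Pinching

variable {a b ι J : Type} [Fintype a] [Fintype b] [Fintype ι] [Fintype J] [DecidableEq a]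

def bobPinching (P : J → Mat b) (X : Mat (a × b)) : Mat (a × b) :=
  ∑ k, (1 ⊗ₖ P k) * X * (1 ⊗ₖ P k)

lemma bobPinching_sum_smul_kronecker (P : J → Mat b) (c : ι → ℂ) (S : ι → Mat a)
    (T : ι → Mat b) :
    bobPinching P (∑ i, c i • (S i ⊗ₖ T i)) = ∑ i, ∑ k, c i • (S i ⊗ₖ (P k * T i * P k)) := by
  simp only [bobPinching, Finset.mul_sum, Finset.sum_mul, mul_smul_comm, smul_mul_assoc,
    one_kronecker_mul_kronecker_mul]
  exact Finset.sum_comm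

lemma bobPinching_sum_smul_kronecker_self {P : J → Mat b} (hP : ∀ k, P k * P k = P k)
    (hPo : OrthFamily P) (c : J → ℂ) (S : J → Mat a) :
    bobPinching P (∑ k, c k • (S k ⊗ₖ P k)) = ∑ k, c k • (S k ⊗ₖ P k) := by
  rw [bobPinching_sum_smul_kronecker]
  refine Finset.sum_congr rfl fun l _ => ?_
  rw [Finset.sum_eq_single l]
  · rw [hP, hP]
  · intro k _ hk
    rw [hPo k l hk, Matrix.zero_mul, kronecker_zero, smul_zero]
  · exact fun h => absurd (Finset.mem_univ l) h

end Pinching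

theorem stmt_4_general {a b : Type} [Fintype a] [Fintype b] (ρ : Mat (a × b))
    (hA : AliceConcordant ρ) (hB : BobConcordant ρ) :
    ∃ (m n : ℕ) (u : Fin m → Mat a) (v : Fin n → Mat b) (r : Fin m × Fin n → ℝ),
      (∀ i, IsRankOneProj (u i)) ∧ OrthFamily u ∧
      (∀ j, IsRankOneProj (v j)) ∧ OrthFamily v ∧
      IsProbDist r ∧
      ρ = ∑ x : Fin m × Fin n, (r x : ℂ) • (u x.1 ⊗ₖ v x.2) := by
  classical
  obtain ⟨m, p, π, σ, hp, hπ, hπo, hσ, hρA⟩ := hA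
  obtain ⟨n, q, τ, P, -, hP, hPo, -, hρB⟩ := hB
  choose c hc0 hc using fun j k => (hP k).exists_mul_mul_self_eq_smul (hσ j).1
  have hpinch : bobPinching P ρ = ρ := by
    rw [hρB]
    exact bobPinching_sum_smul_kronecker_self (fun k => (hP k).2.1) hPo _ _
  have hρ : ρ = ∑ x : Fin m × Fin n, ((p x.1 * c x.1 x.2 : ℝ) : ℂ) • (π x.1 ⊗ₖ P x.2) := by
    rw [← hpinch, hρA, bobPinching_sum_smul_kronecker, Fintype.sum_prod_type]
    simp only [hc, kronecker_smul, smul_smul, Complex.ofReal_mul]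
  refine ⟨m, n, π, P, fun x => p x.1 * c x.1 x.2, hπ, hπo, hP, hPo,
    ⟨fun x => mul_nonneg (hp.1 x.1) (hc0 x.1 x.2), ?_⟩, hρ⟩
  have hweights : ∑ x : Fin m × Fin n, p x.1 * c x.1 x.2 = ∑ j, p j := by
    have htr := (congrArg trace hρ).symm.trans (congrArg trace hρA)
    simp only [trace_sum_smul_kronecker, (hπ _).2.2, (hP _).2.2, (hσ _).2, mul_one] at htr
    exact_mod_cast htr
  exact hweights.trans hp.2

/-- a state that is both Alice- and Bob-concordant is consonant, i.e.
diagonal in a product of orthonormal bases. -/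
theorem stmt_4 {a b : Type} [Fintype a] [Fintype b] (ρ : Mat (a × b))
    (hρ : IsDensity ρ) (hA : AliceConcordant ρ) (hB : BobConcordant ρ) :
    ∃ (m n : ℕ) (u : Fin m → Mat a) (v : Fin n → Mat b) (r : Fin m × Fin n → ℝ),
      (∀ i, IsRankOneProj (u i)) ∧ OrthFamily u ∧
      (∀ j, IsRankOneProj (v j)) ∧ OrthFamily v ∧
      IsProbDist r ∧
      ρ = ∑ x : Fin m × Fin n, (r x : ℂ) • (u x.1 ⊗ₖ v x.2) :=
  stmt_4_general ρ hA hB
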